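/- arXiv:2406.01838 — 3 statements merged into one kernel-verified Lean document; each statement's English description precedes it below -/
import Mathlib

section
/- For gradient descent on a function that is F_w-strongly convex in w with L-Lipschitz gradient in w and F_θ-Lipschitz gradient in θ, with step size α = 1/L and updates w^{k+1} = w^k − α∇_w H(θ, w^k), and with ∇_w H(θ*, w*) = 0, one has ‖w^{k+1} − w*‖² ≤ (1 − F_w/L)‖w^k − w*‖² + (F_θ²/(L F_w))‖θ − θ*‖². -/
open RealInnerProductSpace


private lemma my_descent {d : ℕ} (f : EuclideanSpace ℝ (Fin d) → ℝ)
    (g : EuclideanSpace ℝ (Fin d) → EuclideanSpace ℝ (Fin d)) (L : ℝ) (hL : 0 < L)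
    (hconv : ∀ x y, f x + ⟪g x, y - x⟫ ≤ f y)
    (hlip : ∀ x y, ‖g x - g y‖ ≤ L * ‖x - y‖)
    (x y : EuclideanSpace ℝ (Fin d)) :
    f y ≤ f x + ⟪g x, y - x⟫ + L / 2 * ‖y - x‖ ^ 2 := by
  have main : ∀ n : ℕ, 1 ≤ n →
      f y ≤ f x + ⟪g x, y - x⟫ + L / 2 * ‖y - x‖ ^ 2 + L * ‖y - x‖ ^ 2 / (2 * n) := by
    intro n hn
    have hn0 : (0:ℝ) < n := by exact_mod_cast hn
    have step : ∀ i : ℕ, i ≤ n →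
        f (x + ((i:ℝ) * (1/n)) • (y - x)) ≤
          f x + ((i:ℝ) * (1/n)) * ⟪g x, y - x⟫
            + L * ‖y - x‖ ^ 2 * (1/n) ^ 2 * ((i:ℝ) * ((i:ℝ) + 1) / 2) := by
      intro i
      induction i with
      | zero => intro _; simp
      | succ i ih =>
        intro hi
        push_cast
        have IH := ih (Nat.le_of_succ_le hi)
        have hs0 : (0:ℝ) < 1/n := by positivity
        have hpq : (x + (((i:ℝ)+1) * (1/n)) • (y - x)) - (x + ((i:ℝ) * (1/n)) • (y - x))
            = (1/(n:ℝ)) • (y - x) := by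
          rw [add_sub_add_left_eq_sub, ← sub_smul]
          congr 1
          ring
        have hqx : ‖(x + (((i:ℝ)+1) * (1/n)) • (y - x)) - x‖
            = (((i:ℝ)+1) * (1/n)) * ‖y - x‖ := by
          rw [add_sub_cancel_left, norm_smul, Real.norm_eq_abs, abs_of_nonneg (by positivity)]
        set q := x + (((i:ℝ)+1) * (1/n)) • (y - x) with hqdef
        set p := x + ((i:ℝ) * (1/n)) • (y - x) with hpdef
        have h1 : f q ≤ f p + ⟪g q, q - p⟫ := by
          have h := hconv q p
          rw [show p - q = -(q - p) by abel, inner_neg_right] at h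
          linarith
        have h2 : ⟪g q, q - p⟫ = (1/(n:ℝ)) * ⟪g x, y - x⟫ + (1/(n:ℝ)) * ⟪g q - g x, y - x⟫ := by
          rw [hpq, real_inner_smul_right, inner_sub_left]; ring
        have h3 : ⟪g q - g x, y - x⟫ ≤ L * ((((i:ℝ)+1) * (1/n)) * ‖y - x‖) * ‖y - x‖ := by
          calc ⟪g q - g x, y - x⟫ ≤ ‖g q - g x‖ * ‖y - x‖ := real_inner_le_norm _ _
            _ ≤ (L * ‖q - x‖) * ‖y - x‖ :=
                mul_le_mul_of_nonneg_right (hlip q x) (norm_nonneg _)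
            _ = L * ((((i:ℝ)+1) * (1/n)) * ‖y - x‖) * ‖y - x‖ := by rw [hqx]
        have h3' := mul_le_mul_of_nonneg_left h3 hs0.le
        have h4 : f q ≤ f p + ((1/(n:ℝ)) * ⟪g x, y - x⟫
            + (1/(n:ℝ)) * (L * ((((i:ℝ)+1) * (1/n)) * ‖y - x‖) * ‖y - x‖)) := by
          rw [h2] at h1; linarith
        have h5 : f q ≤ (f x + ((i:ℝ) * (1/n)) * ⟪g x, y - x⟫
            + L * ‖y - x‖ ^ 2 * (1/n) ^ 2 * ((i:ℝ) * ((i:ℝ) + 1) / 2))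
            + ((1/(n:ℝ)) * ⟪g x, y - x⟫
            + (1/(n:ℝ)) * (L * ((((i:ℝ)+1) * (1/n)) * ‖y - x‖) * ‖y - x‖)) := by linarith
        refine h5.trans_eq ?_
        ring
    have hlast := step n le_rfl
    have hxy : x + ((n:ℝ) * (1/n)) • (y - x) = y := by
      rw [mul_one_div_cancel hn0.ne', one_smul]
      abel
    rw [hxy] at hlast
    have hEq : f x + ((n:ℝ) * (1/n)) * ⟪g x, y - x⟫
        + L * ‖y - x‖ ^ 2 * (1/n) ^ 2 * ((n:ℝ) * ((n:ℝ) + 1) / 2)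
        = f x + ⟪g x, y - x⟫ + L / 2 * ‖y - x‖ ^ 2 + L * ‖y - x‖ ^ 2 / (2 * n) := by
      field_simp
      ring
    linarith [hEq ▸ hlast]
  refine le_of_forall_pos_le_add ?_
  intro ε hε
  obtain ⟨n, hn⟩ := exists_nat_gt (max 1 (L * ‖y - x‖ ^ 2 / (2 * ε)))
  have hn1 : 1 ≤ n := by
    by_contra hcon
    push_neg at hcon
    interval_cases n
    have h1 := le_max_left (1:ℝ) (L * ‖y - x‖ ^ 2 / (2 * ε))
    norm_num at hn
  have hn0 : (0:ℝ) < n := by exact_mod_cast hn1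
  have h2 : L * ‖y - x‖ ^ 2 / (2 * ε) < n := (le_max_right _ _).trans_lt hn
  have hB : 0 ≤ L * ‖y - x‖ ^ 2 := by positivity
  have h3 : L * ‖y - x‖ ^ 2 / (2 * n) ≤ ε := by
    rw [div_le_iff₀ (by positivity)]
    rw [div_lt_iff₀ (by positivity)] at h2
    nlinarith
  linarith [main n hn1]


private lemma my_coco {d : ℕ} (f : EuclideanSpace ℝ (Fin d) → ℝ)
    (g : EuclideanSpace ℝ (Fin d) → EuclideanSpace ℝ (Fin d)) (L : ℝ) (hL : 0 < L)
    (hconv : ∀ x y, f x + ⟪g x, y - x⟫ ≤ f y)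
    (hdes : ∀ x y, f y ≤ f x + ⟪g x, y - x⟫ + L / 2 * ‖y - x‖ ^ 2)
    (x y : EuclideanSpace ℝ (Fin d)) :
    1 / L * ‖g y - g x‖ ^ 2 ≤ ⟪g y - g x, y - x⟫ := by
  have key : ∀ a b : EuclideanSpace ℝ (Fin d),
      f a + ⟪g a, b - a⟫ + 1 / L * ‖g b - g a‖ ^ 2 / 2 ≤ f b := by
    intro a b
    have h1 := hdes b (b - (1 / L) • (g b - g a))
    have h2 := hconv a (b - (1 / L) • (g b - g a))
    rw [show b - (1 / L) • (g b - g a) - b = -((1 / L) • (g b - g a)) by abel,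
      inner_neg_right, real_inner_smul_right, norm_neg, norm_smul, Real.norm_eq_abs,
      abs_of_pos (show (0:ℝ) < 1 / L by positivity)] at h1
    rw [show b - (1 / L) • (g b - g a) - a = (b - a) - (1 / L) • (g b - g a) from
        sub_right_comm _ _ _,
      inner_sub_right, real_inner_smul_right] at h2
    have e3 : ⟪g b, g b - g a⟫ - ⟪g a, g b - g a⟫ = ‖g b - g a‖ ^ 2 := by
      rw [← inner_sub_left, real_inner_self_eq_norm_sq]
    have e3' : 1 / L * ⟪g b, g b - g a⟫ - 1 / L * ⟪g a, g b - g a⟫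
        = 1 / L * ‖g b - g a‖ ^ 2 := by linear_combination (1 / L) * e3
    have e4 : L / 2 * (1 / L * ‖g b - g a‖) ^ 2 = 1 / L * ‖g b - g a‖ ^ 2 / 2 := by
      field_simp
    rw [e4] at h1
    linarith
  have k1 := key x y
  have k2 := key y x
  rw [norm_sub_rev] at k2
  rw [show x - y = -(y - x) by abel, inner_neg_right] at k2
  rw [inner_sub_left]
  linarith

theorem lemma_A2 {d : ℕ} (H : EuclideanSpace ℝ (Fin d) → EuclideanSpace ℝ (Fin d) → ℝ)
    (gradW : EuclideanSpace ℝ (Fin d) → EuclideanSpace ℝ (Fin d) → EuclideanSpace ℝ (Fin d))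
    (Fw Fθ L : ℝ) (hFw : 0 < Fw) (hFθ : 0 < Fθ) (hL : 0 < L) (hFwL : Fw ≤ L)
    (θs ws : EuclideanSpace ℝ (Fin d))
    (hlipθ : ∀ θ₁ θ₂ w, ‖gradW θ₁ w - gradW θ₂ w‖ ≤ Fθ * ‖θ₁ - θ₂‖)
    (hlipw : ∀ θ w₁ w₂, ‖gradW θ w₁ - gradW θ w₂‖ ≤ L * ‖w₁ - w₂‖)
    (hsc : ∀ θ w₁ w₂, H θ w₂ ≥ H θ w₁ + ⟪gradW θ w₁, w₂ - w₁⟫ + Fw / 2 * ‖w₂ - w₁‖ ^ 2)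
    (hstar : gradW θs ws = 0)
    (θ wk wk1 : EuclideanSpace ℝ (Fin d))
    (hstep : wk1 = wk - (1 / L) • gradW θ wk) :
    ‖wk1 - ws‖ ^ 2 ≤ (1 - Fw / L) * ‖wk - ws‖ ^ 2 + Fθ ^ 2 / (L * Fw) * ‖θ - θs‖ ^ 2 := by
  have hconv_f : ∀ x y, H θ x + ⟪gradW θ x, y - x⟫ ≤ H θ y := by
    intro x y
    have h := hsc θ x y
    nlinarith [sq_nonneg ‖y - x‖, hFw.le]
  have hdes_f : ∀ x y, H θ y ≤ H θ x + ⟪gradW θ x, y - x⟫ + L / 2 * ‖y - x‖ ^ 2 :=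
    my_descent (H θ) (gradW θ) L hL hconv_f (fun x y => hlipw θ x y)
  -- strong monotonicity
  have hSC : Fw * ‖wk - ws‖ ^ 2 ≤ ⟪gradW θ wk - gradW θ ws, wk - ws⟫ := by
    have h1 := hsc θ wk ws
    have h2 := hsc θ ws wk
    rw [show ws - wk = -(wk - ws) by abel, inner_neg_right, norm_neg] at h1
    rw [inner_sub_left]
    linarith
  -- the key contraction, via A := L • (wk - ws) - (gradW θ wk - gradW θ ws)
  have hnA : ‖L • (wk - ws) - (gradW θ wk - gradW θ ws)‖ ^ 2 ≤ ((L - Fw) * ‖wk - ws‖) ^ 2 := by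
    rcases eq_or_lt_of_le hFwL with hEq | hLt
    · -- Fw = L
      have hcoco := my_coco (H θ) (gradW θ) L hL hconv_f hdes_f ws wk
      have hDD : 1 / L * ‖gradW θ wk - gradW θ ws‖ ^ 2
          ≤ ⟪gradW θ wk - gradW θ ws, wk - ws⟫ := hcoco
      have hDD' : ‖gradW θ wk - gradW θ ws‖ ^ 2
          ≤ L * ⟪gradW θ wk - gradW θ ws, wk - ws⟫ := by
        have := mul_le_mul_of_nonneg_left hDD hL.le
        rw [show L * (1 / L * ‖gradW θ wk - gradW θ ws‖ ^ 2)
            = ‖gradW θ wk - gradW θ ws‖ ^ 2 by field_simp] at this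
        exact this
      rw [norm_sub_sq_real, norm_smul, real_inner_smul_left, Real.norm_eq_abs,
        abs_of_pos hL]
      rw [real_inner_comm] at hSC
      rw [real_inner_comm] at hDD'
      subst hEq
      nlinarith [hSC, hDD', mul_le_mul_of_nonneg_left hSC hFw.le]
    · -- Fw < L
      set ff : EuclideanSpace ℝ (Fin d) → ℝ := fun w => H θ w - Fw / 2 * ‖w‖ ^ 2 with hff
      set gg : EuclideanSpace ℝ (Fin d) → EuclideanSpace ℝ (Fin d) :=
        fun w => gradW θ w - Fw • w with hgg
      have eN : ∀ x y : EuclideanSpace ℝ (Fin d),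
          Fw / 2 * ‖y‖ ^ 2 = Fw / 2 * ‖x‖ ^ 2 + Fw * ⟪x, y - x⟫ + Fw / 2 * ‖y - x‖ ^ 2 := by
        intro x y
        have h := norm_add_sq_real x (y - x)
        rw [add_sub_cancel] at h
        linear_combination (Fw / 2) * h
      have eG : ∀ x y : EuclideanSpace ℝ (Fin d),
          ⟪gg x, y - x⟫ = ⟪gradW θ x, y - x⟫ - Fw * ⟪x, y - x⟫ := by
        intro x y
        simp only [hgg]
        rw [inner_sub_left, real_inner_smul_left]
      have hconv_t : ∀ x y, ff x + ⟪gg x, y - x⟫ ≤ ff y := by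
        intro x y
        have h := hsc θ x y
        have h2 := eN x y
        rw [eG]
        simp only [hff]
        linarith
      have hdes_t : ∀ x y, ff y ≤ ff x + ⟪gg x, y - x⟫ + (L - Fw) / 2 * ‖y - x‖ ^ 2 := by
        intro x y
        have h := hdes_f x y
        have h2 := eN x y
        rw [eG]
        simp only [hff]
        linarith
      have hcoco := my_coco ff gg (L - Fw) (by linarith) hconv_t hdes_t ws wk
      have core : ‖gg wk - gg ws‖ ^ 2 ≤ 2 * ((L - Fw) * ⟪wk - ws, gg wk - gg ws⟫) := by
        have h := mul_le_mul_of_nonneg_left hcoco (by linarith : (0:ℝ) ≤ L - Fw)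
        have hne : L - Fw ≠ 0 := by linarith
        rw [show (L - Fw) * (1 / (L - Fw) * ‖gg wk - gg ws‖ ^ 2)
            = ‖gg wk - gg ws‖ ^ 2 by field_simp] at h
        rw [real_inner_comm] at h
        nlinarith [sq_nonneg ‖gg wk - gg ws‖]
      have hAu : L • (wk - ws) - (gradW θ wk - gradW θ ws)
          = (L - Fw) • (wk - ws) - (gg wk - gg ws) := by
        simp only [hgg]
        module
      rw [hAu, norm_sub_sq_real, norm_smul, real_inner_smul_left, Real.norm_eq_abs,
        abs_of_pos (by linarith : (0:ℝ) < L - Fw)]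
      linarith [core]
  have hnA' : ‖L • (wk - ws) - (gradW θ wk - gradW θ ws)‖ ≤ (L - Fw) * ‖wk - ws‖ := by
    have hnn : (0:ℝ) ≤ (L - Fw) * ‖wk - ws‖ := by
      have : (0:ℝ) ≤ L - Fw := by linarith
      positivity
    nlinarith [norm_nonneg (L • (wk - ws) - (gradW θ wk - gradW θ ws)), hnA]
  have hAv : (wk - ws) - (1 / L) • (gradW θ wk - gradW θ ws)
      = (1 / L) • (L • (wk - ws) - (gradW θ wk - gradW θ ws)) := by
    rw [smul_sub (1 / L) (L • (wk - ws)) (gradW θ wk - gradW θ ws), smul_smul,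
      show (1 / L) * L = 1 by field_simp, one_smul]
  have hE : ‖gradW θ ws‖ ≤ Fθ * ‖θ - θs‖ := by
    have h := hlipθ θ θs ws
    rwa [hstar, sub_zero] at h
  have hsplit : wk1 - ws = ((wk - ws) - (1 / L) • (gradW θ wk - gradW θ ws))
      - (1 / L) • gradW θ ws := by
    rw [hstep]
    module
  have hXbound : ‖wk1 - ws‖ ≤ (1 - Fw / L) * ‖wk - ws‖ + 1 / L * (Fθ * ‖θ - θs‖) := by
    rw [hsplit]
    have t1 : ‖((wk - ws) - (1 / L) • (gradW θ wk - gradW θ ws)) - (1 / L) • gradW θ ws‖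
        ≤ ‖(wk - ws) - (1 / L) • (gradW θ wk - gradW θ ws)‖ + ‖(1 / L) • gradW θ ws‖ :=
      norm_sub_le _ _
    have t2 : ‖(wk - ws) - (1 / L) • (gradW θ wk - gradW θ ws)‖ ≤ (1 - Fw / L) * ‖wk - ws‖ := by
      rw [hAv, norm_smul, Real.norm_eq_abs, abs_of_pos (by positivity : (0:ℝ) < 1 / L)]
      have := mul_le_mul_of_nonneg_left hnA' (by positivity : (0:ℝ) ≤ 1 / L)
      rw [show 1 / L * ((L - Fw) * ‖wk - ws‖) = (1 - Fw / L) * ‖wk - ws‖ by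
        field_simp] at this
      exact this
    have t3 : ‖(1 / L) • gradW θ ws‖ ≤ 1 / L * (Fθ * ‖θ - θs‖) := by
      rw [norm_smul, Real.norm_eq_abs, abs_of_pos (by positivity : (0:ℝ) < 1 / L)]
      exact mul_le_mul_of_nonneg_left hE (by positivity)
    linarith
  have hq0 : (0:ℝ) ≤ 1 - Fw / L := by
    rw [sub_nonneg, div_le_one hL]
    exact hFwL
  have hsq : ‖wk1 - ws‖ ^ 2 ≤ ((1 - Fw / L) * ‖wk - ws‖ + 1 / L * (Fθ * ‖θ - θs‖)) ^ 2 :=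
    pow_le_pow_left₀ (norm_nonneg _) hXbound 2
  have hfinal : ((1 - Fw / L) * ‖wk - ws‖ + 1 / L * (Fθ * ‖θ - θs‖)) ^ 2
      + (L - Fw) / (L ^ 2 * Fw) * (Fw * ‖wk - ws‖ - Fθ * ‖θ - θs‖) ^ 2
      = (1 - Fw / L) * ‖wk - ws‖ ^ 2 + Fθ ^ 2 / (L * Fw) * ‖θ - θs‖ ^ 2 := by
    field_simp
    ring
  have hnn2 : 0 ≤ (L - Fw) / (L ^ 2 * Fw) * (Fw * ‖wk - ws‖ - Fθ * ‖θ - θs‖) ^ 2 := by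
    have h1 : (0:ℝ) ≤ L - Fw := by linarith
    positivity
  linarith
end

section
/- Let A, B be reals with 1 < A < 2, B > 3A, and B² − 8A² > 0. Set x = (A−1)/(B + √(B²−8A²)) and E = 8Ax² − 2Bx + A. Then 0 < E < 1. -/
theorem E_bound (A B : ℝ) (hA1 : 1 < A) (hA2 : A < 2) (hB : B > 3 * A)
    (hB2 : B ^ 2 - 8 * A ^ 2 > 0)
    (x E : ℝ) (hx : x = (A - 1) / (B + Real.sqrt (B ^ 2 - 8 * A ^ 2)))
    (hE : E = 8 * A * x ^ 2 - 2 * B * x + A) :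
    0 < E ∧ E < 1 := by
  set s := Real.sqrt (B ^ 2 - 8 * A ^ 2) with hs
  have hs0 : 0 ≤ s := Real.sqrt_nonneg _
  have hs2 : s ^ 2 = B ^ 2 - 8 * A ^ 2 := Real.sq_sqrt hB2.le
  have hBpos : 0 < B := by linarith
  have hden : 0 < B + s := by linarith
  have hx1 : x * (B + s) = A - 1 := by
    rw [hx]; field_simp
  have hE' : E * (B + s) ^ 2 = 2 * s * (s + B) + 8 * A := by
    have h2 : (x * (B + s)) ^ 2 = (A - 1) ^ 2 := by rw [hx1]
    rw [hE]; linear_combination 8 * A * h2 - 2 * B * (B + s) * hx1 + (A - 2) * hs2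
  constructor
  · nlinarith [mul_pos hden hden, mul_nonneg hs0 hden.le]
  · nlinarith [mul_pos hden hden, mul_nonneg hs0 hden.le]
end

section
/- Let a ∈ [0,1), η ∈ (0,1), A = 1 + η²(1−a) ∈ (1,2), B ≥ 7 − A, and x = (A−1)/(B + √(B²−8A²)). Then G := 8ax² + 2ax + a < 1. -/
theorem G_bound (a η A B : ℝ) (ha0 : 0 ≤ a) (ha1 : a < 1)
    (hη0 : 0 < η) (hη1 : η < 1)
    (hA : A = 1 + η ^ 2 * (1 - a)) (hB : B ≥ 7 - A)
    (x G : ℝ) (hx : x = (A - 1) / (B + Real.sqrt (B ^ 2 - 8 * A ^ 2)))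
    (hG : G = 8 * a * x ^ 2 + 2 * a * x + a) :
    G < 1 := by
  have h1a : 0 < 1 - a := by linarith
  have hη2 : η ^ 2 < 1 := by nlinarith
  have ht : 0 < A - 1 := by
    rw [hA]; have := mul_pos (pow_pos hη0 2) h1a; linarith
  have htlt : A - 1 < 1 - a := by
    rw [hA]; nlinarith
  have hA2 : A < 2 := by linarith
  have hs : 0 ≤ Real.sqrt (B ^ 2 - 8 * A ^ 2) := Real.sqrt_nonneg _
  have hd : (5 : ℝ) < B + Real.sqrt (B ^ 2 - 8 * A ^ 2) := by linarith
  have hx0 : 0 < x := by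
    rw [hx]; exact div_pos ht (by linarith)
  have hx5 : x < (1 - a) / 5 := by
    rw [hx]
    calc (A - 1) / (B + Real.sqrt (B ^ 2 - 8 * A ^ 2)) < (A - 1) / 5 :=
          div_lt_div_of_pos_left ht (by norm_num) hd
      _ < (1 - a) / 5 := by linarith
  rw [hG]
  nlinarith [mul_nonneg ha0 (sq_nonneg x), mul_nonneg ha0 hx0.le, sq_nonneg x,
    mul_pos hx0 hx0, mul_lt_mul_of_pos_left hx5 hx0]
end
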